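/- Consider system (1) under Assumption (A1) and run Algorithm 1. Then there exists a finite constant β̂ ≥ ε such that |θ̂_{k,k−1,t}(i)| ≤ β̂ for all k ≥ 1 and all 0 ≤ i ≤ t ≤ T−1, and moreover θ̂_{k,k−1,t}(t) ∈ [ε, β̂] for all k ≥ 1 and all t ∈ {0,…,T−1}. This holds for any choice of λ > 0 and γ₁,…,γ_m > 0. -/

import Mathlib

/-!
By the mean value theorem, applied at each time step of the recursion (1), the output difference
of two runs is `y_k(t+1) - y_{k-1}(t+1) = ∑_{q ≤ t} c(q) Δu_k(q)`, with coefficients built from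
partial derivatives of `f` and hence bounded independently of `k`. In terms of
`φ = Δu_k(0..t)`, `A = μ₁/(μ₁+μ₂) < 1` and `μ = μ₁+μ₂`, the estimator update is
`θ̂_k = c + P (A θ̂_{k-1} - c)` with `P = I - φ φᵀ / (μ + ‖φ‖²)` a contraction, so
`‖θ̂_k‖ ≤ A ‖θ̂_{k-1}‖ + 2 ‖c‖`; resetting the diagonal entry adds at most `|θ̂_{1,0,t}(t)|`.
A linear recursion with rate `A < 1` stays bounded, and the reset keeps the diagonal above `ε`.
-/

open Filter

/-- The argument vector `(y(t),…,y(t−l), u(t),…,u(t−n))` fed to the nonlinearity of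
system (1), with the conventions `y(i) = 0` and `u(i) = 0` for `i < 0`. -/
def sysArg (l n : ℕ) (y u : ℕ → ℝ) (t : ℕ) : Fin (l + n + 2) → ℝ :=
  fun j =>
    if (j : ℕ) ≤ l then (if (j : ℕ) ≤ t then y (t - (j : ℕ)) else 0)
    else (if (j : ℕ) - (l + 1) ≤ t then u (t - ((j : ℕ) - (l + 1))) else 0)

/-- `y` is the output trajectory of system (1) generated by the nonlinearity `f`,
the initial output `y₀` and the input sequence `u`. -/
def IsTraj (l n T : ℕ) (f : (Fin (l + n + 2) → ℝ) → ℕ → ℝ) (y₀ : ℝ)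
    (u y : ℕ → ℝ) : Prop :=
  y 0 = y₀ ∧ ∀ t, t < T → y (t + 1) = f (sysArg l n y u t) t

open Finset
open scoped RealInnerProductSpace

section InnerProductSpace

variable {E : Type*} [NormedAddCommGroup E] [InnerProductSpace ℝ E]

theorem norm_sub_inner_div_smul_le {μ : ℝ} (hμ : 0 < μ) (x φ : E) :
    ‖x - (⟪φ, x⟫ / (μ + ‖φ‖ ^ 2)) • φ‖ ≤ ‖x‖ := by
  set q := ⟪φ, x⟫ / (μ + ‖φ‖ ^ 2)
  have hq : q * (μ + ‖φ‖ ^ 2) = ⟪φ, x⟫ := div_mul_cancel₀ _ (by positivity)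
  have hsq : ‖x - q • φ‖ ^ 2 = ‖x‖ ^ 2 - q ^ 2 * (2 * μ + ‖φ‖ ^ 2) := by
    rw [norm_sub_sq_real, inner_smul_right, norm_smul, real_inner_comm, ← hq,
      Real.norm_eq_abs, mul_pow, sq_abs]
    ring
  have hdecr : 0 ≤ q ^ 2 * (2 * μ + ‖φ‖ ^ 2) := by positivity
  exact (pow_le_pow_iff_left₀ (norm_nonneg _) (norm_nonneg _) two_ne_zero).1 (by linarith)

theorem norm_smul_add_inner_sub_div_smul_le {A μ : ℝ} (hA : 0 ≤ A) (hμ : 0 < μ) (θ φ c : E) :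
    ‖A • θ + ((⟪φ, c⟫ - A * ⟪φ, θ⟫) / (μ + ‖φ‖ ^ 2)) • φ‖ ≤ A * ‖θ‖ + 2 * ‖c‖ := by
  set x := A • θ - c
  have hx : A • θ + ((⟪φ, c⟫ - A * ⟪φ, θ⟫) / (μ + ‖φ‖ ^ 2)) • φ
      = c + (x - (⟪φ, x⟫ / (μ + ‖φ‖ ^ 2)) • φ) := by
    simp only [x, inner_sub_right, inner_smul_right]
    rw [show ⟪φ, c⟫ - A * ⟪φ, θ⟫ = -(A * ⟪φ, θ⟫ - ⟪φ, c⟫) by ring, neg_div, neg_smul]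
    abel
  calc _ = ‖c + (x - (⟪φ, x⟫ / (μ + ‖φ‖ ^ 2)) • φ)‖ := by rw [hx]
    _ ≤ ‖c‖ + ‖x‖ :=
      (norm_add_le _ _).trans (add_le_add_right (norm_sub_inner_div_smul_le hμ x φ) _)
    _ ≤ ‖c‖ + (A * ‖θ‖ + ‖c‖) := by grw [norm_sub_le, norm_smul, Real.norm_of_nonneg hA]
    _ = A * ‖θ‖ + 2 * ‖c‖ := by ring

end InnerProductSpace

theorem le_max_of_le_mul_add {a : ℕ → ℝ} {A R : ℝ} (hA0 : 0 ≤ A) (hA1 : A < 1)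
    (h : ∀ j, a (j + 1) ≤ A * a j + R) (j : ℕ) : a j ≤ max (a 0) (R / (1 - A)) := by
  induction j with
  | zero => exact le_max_left _ _
  | succ j ih =>
    have hR : R ≤ (1 - A) * max (a 0) (R / (1 - A)) :=
      (div_le_iff₀' (by linarith)).1 (le_max_right _ _)
    calc a (j + 1) ≤ A * a j + R := h j
      _ ≤ A * max (a 0) (R / (1 - A)) + R := by gcongr
      _ ≤ max (a 0) (R / (1 - A)) := by linarith

def vecOn (s : Finset ℕ) (x : ℕ → ℝ) : EuclideanSpace ℝ s := WithLp.toLp 2 fun i => x i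

namespace vecOn

variable (s : Finset ℕ) (x y : ℕ → ℝ)

@[simp]
theorem apply (i : s) : vecOn s x i = x i := rfl

theorem inner_eq : ⟪vecOn s x, vecOn s y⟫ = ∑ i ∈ s, y i * x i := by
  simp only [PiLp.inner_apply, apply, RCLike.inner_apply, conj_trivial]
  exact sum_coe_sort s fun i => y i * x i

theorem norm_sq : ‖vecOn s x‖ ^ 2 = ∑ i ∈ s, x i ^ 2 := by
  rw [EuclideanSpace.real_norm_sq_eq]
  exact sum_coe_sort s fun i => x i ^ 2

theorem abs_le_norm {i : ℕ} (hi : i ∈ s) : |x i| ≤ ‖vecOn s x‖ :=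
  PiLp.norm_apply_le (vecOn s x) ⟨i, hi⟩

variable {s x y}

theorem congr (h : ∀ i ∈ s, x i = y i) : vecOn s x = vecOn s y := by
  ext i
  exact h i i.2

theorem norm_le_sqrt_card_mul {C : ℝ} (hC : ∀ i, |x i| ≤ C) :
    ‖vecOn s x‖ ≤ √(#s : ℝ) * C := by
  have hC0 : 0 ≤ C := (abs_nonneg _).trans (hC 0)
  rw [← Real.sqrt_sq hC0, ← Real.sqrt_mul (Nat.cast_nonneg _), ← Real.sqrt_sq (norm_nonneg _)]
  refine Real.sqrt_le_sqrt ?_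
  rw [norm_sq, ← nsmul_eq_mul]
  exact sum_le_card_nsmul _ _ _ fun i _ => sq_le_sq' (abs_le.1 (hC i)).1 (abs_le.1 (hC i)).2

theorem norm_update_le (t : ℕ) (b : ℝ) :
    ‖vecOn s (Function.update x t b)‖ ≤ ‖vecOn s x‖ + |b| := by
  have hpt : ∀ i ∈ s, Function.update x t b i ^ 2 ≤ x i ^ 2 + if i = t then b ^ 2 else 0 := by
    intro i _
    by_cases hit : i = t
    · subst hit
      simp [sq_nonneg]
    · simp [hit]
  have hsq : ‖vecOn s (Function.update x t b)‖ ^ 2 ≤ (‖vecOn s x‖ + |b|) ^ 2 :=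
    calc _ ≤ ∑ i ∈ s, (x i ^ 2 + if i = t then b ^ 2 else 0) := by
          rw [norm_sq]
          exact sum_le_sum hpt
      _ ≤ ‖vecOn s x‖ ^ 2 + b ^ 2 := by
          rw [sum_add_distrib, sum_ite_eq', norm_sq]
          split_ifs <;> simp [sq_nonneg]
      _ ≤ _ := by nlinarith [sq_abs b, norm_nonneg (vecOn s x), abs_nonneg b]
  exact (pow_le_pow_iff_left₀ (norm_nonneg _) (by positivity) two_ne_zero).1 hsq

theorem norm_reset_le {ε b : ℝ} {t : ℕ}
    (h : ∀ i ∈ s, x i = if i = t ∧ y t < ε then b else y i) :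
    ‖vecOn s x‖ ≤ ‖vecOn s y‖ + |b| := by
  by_cases hy : y t < ε
  · rw [congr (y := Function.update y t b) fun i hi => by
      simp only [h i hi, hy, and_true, Function.update_apply]]
    exact norm_update_le t b
  · rw [congr (y := y) fun i hi => by simp [h i hi, hy]]
    exact le_add_of_nonneg_right (abs_nonneg b)

theorem norm_estimate_update_le {A μ : ℝ} (hA : 0 ≤ A) (hμ : 0 < μ) {θ φ c r : ℕ → ℝ}
    (hr : ∀ i, r i = A * θ i + φ i / (μ + ∑ j ∈ s, φ j ^ 2)
        * (∑ q ∈ s, c q * φ q - A * ∑ j ∈ s, θ j * φ j)) :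
    ‖vecOn s r‖ ≤ A * ‖vecOn s θ‖ + 2 * ‖vecOn s c‖ := by
  have hvec : vecOn s r = A • vecOn s θ
      + ((⟪vecOn s φ, vecOn s c⟫ - A * ⟪vecOn s φ, vecOn s θ⟫)
        / (μ + ‖vecOn s φ‖ ^ 2)) • vecOn s φ := by
    ext i
    simp only [apply, hr, inner_eq, norm_sq, PiLp.add_apply, PiLp.smul_apply, smul_eq_mul]
    ring
  rw [hvec]
  exact norm_smul_add_inner_sub_div_smul_le hA hμ _ _ _

end vecOn

theorem exists_sub_eq_sum_fderiv_mul {ι : Type*} [Fintype ι] [DecidableEq ι]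
    {g : (ι → ℝ) → ℝ} (hg : Differentiable ℝ g) (a b : ι → ℝ) :
    ∃ ξ, g b - g a = ∑ j, fderiv ℝ g ξ (Pi.single j 1) * (b j - a j) := by
  obtain ⟨ξ, -, hξ⟩ := domain_mvt (fun x _ => (hg x).hasFDerivAt.hasFDerivWithinAt)
    convex_univ (Set.mem_univ a) (Set.mem_univ b)
  refine ⟨ξ, ?_⟩
  conv_lhs => rw [hξ, pi_eq_sum_univ' (b - a), map_sum]
  simp [mul_comm]

def IsBoundedComb (C : ℝ) (d : ℕ → ℝ) (s : ℕ) (z : ℝ) : Prop :=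
  ∃ c : ℕ → ℝ, (∀ q, |c q| ≤ C) ∧ z = ∑ q ∈ range s, c q * d q

namespace IsBoundedComb

variable {C C' : ℝ} {d : ℕ → ℝ} {s s' : ℕ} {z : ℝ}

theorem mono (h : IsBoundedComb C d s z) (hC : C ≤ C') (hs : s ≤ s') :
    IsBoundedComb C' d s' z := by
  obtain ⟨c, hcC, rfl⟩ := h
  refine ⟨fun q => if q < s then c q else 0, fun q => ?_, ?_⟩
  · have hC0 : 0 ≤ C := (abs_nonneg _).trans (hcC 0)
    dsimp only
    split_ifs
    · exact (hcC q).trans hC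
    · simpa using hC0.trans hC
  · rw [← sum_range_add_sum_Ico _ hs, sum_eq_zero (s := Ico s s'), add_zero]
    · exact sum_congr rfl fun q hq => by simp [mem_range.1 hq]
    · intro q hq
      simp [(mem_Ico.1 hq).1.not_gt]

theorem zero (hC : 0 ≤ C) : IsBoundedComb C d s 0 :=
  ⟨0, fun _ => by simpa using hC, by simp⟩

theorem apply {q : ℕ} (hq : q < s) : IsBoundedComb 1 d s (d q) :=
  ⟨Pi.single q 1, fun i => by by_cases h : i = q <;> simp [h],
    by simp [Pi.single_apply, mem_range.2 hq]⟩

theorem sum_mul {ι : Type*} [Fintype ι] {β : ℝ} {g x : ι → ℝ} (hg : ∀ j, |g j| ≤ β)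
    (hx : ∀ j, IsBoundedComb C d s (x j)) :
    IsBoundedComb (Fintype.card ι * (β * C)) d s (∑ j, g j * x j) := by
  choose c hcC hc using hx
  refine ⟨fun q => ∑ j, g j * c j q, fun q => ?_, ?_⟩
  · calc |∑ j, g j * c j q| ≤ ∑ j, |g j| * |c j q| := by
          simpa only [abs_mul] using abs_sum_le_sum_abs (fun j => g j * c j q) univ
      _ ≤ ∑ _j : ι, β * C := sum_le_sum fun j _ =>
          mul_le_mul (hg j) (hcC j q) (abs_nonneg _) ((abs_nonneg _).trans (hg j))
      _ = Fintype.card ι * (β * C) := by simp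
  · simp_rw [hc, Finset.mul_sum, Finset.sum_mul]
    rw [sum_comm]
    exact sum_congr rfl fun _ _ => sum_congr rfl fun _ _ => by ring

end IsBoundedComb

theorem sysArg_sub_isBoundedComb {l n t : ℕ} {C : ℝ} {v w yv yw : ℕ → ℝ}
    (hy : ∀ r ≤ t, IsBoundedComb C (fun q => v q - w q) r (yv r - yw r))
    (j : Fin (l + n + 2)) :
    IsBoundedComb (max C 1) (fun q => v q - w q) (t + 1)
      (sysArg l n yv v t j - sysArg l n yw w t j) := by
  have h0 : IsBoundedComb (max C 1) (fun q => v q - w q) (t + 1) 0 :=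
    IsBoundedComb.zero (le_max_of_le_right zero_le_one)
  unfold sysArg
  split_ifs
  · exact (hy _ (Nat.sub_le _ _)).mono (le_max_left _ _) (by omega)
  · simpa using h0
  · exact (IsBoundedComb.apply (d := fun q => v q - w q) (by omega)).mono
      (le_max_right _ _) le_rfl
  · simpa using h0

theorem exists_isBoundedComb_traj_sub {l n T : ℕ} {f : (Fin (l + n + 2) → ℝ) → ℕ → ℝ}
    {β y₀ : ℝ} (hf : ∀ t < T, Differentiable ℝ fun x => f x t)
    (hβ : ∀ t < T, ∀ x i, |fderiv ℝ (fun x => f x t) x (Pi.single i 1)| ≤ β) :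
    ∀ t ≤ T, ∃ C, ∀ v w yv yw, IsTraj l n T f y₀ v yv → IsTraj l n T f y₀ w yw →
      ∀ s ≤ t, IsBoundedComb C (fun q => v q - w q) s (yv s - yw s) := by
  intro t
  induction t with
  | zero =>
    refine fun _ => ⟨0, fun v w yv yw hv hw s hs => ?_⟩
    obtain rfl : s = 0 := Nat.le_zero.1 hs
    rw [hv.1, hw.1, sub_self]
    exact IsBoundedComb.zero le_rfl
  | succ t ih =>
    intro htT
    obtain ⟨C, hC⟩ := ih (by omega)
    refine ⟨max C ((l + n + 2 : ℕ) * (β * max C 1)), fun v w yv yw hv hw s hs => ?_⟩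
    obtain hst | rfl := Nat.lt_or_eq_of_le hs
    · exact (hC v w yv yw hv hw s (by omega)).mono (le_max_left _ _) le_rfl
    obtain ⟨ξ, hξ⟩ := exists_sub_eq_sum_fderiv_mul (hf t (by omega))
      (sysArg l n yw w t) (sysArg l n yv v t)
    rw [hv.2 t (by omega), hw.2 t (by omega), hξ]
    refine (IsBoundedComb.sum_mul (hβ t (by omega) ξ)
      (sysArg_sub_isBoundedComb (hC v w yv yw hv hw))).mono ?_ le_rfl
    simp

theorem norm_estimate_step_le {μ₁ μ₂ ε b C : ℝ} (hμ₁ : 0 < μ₁) (hμ₂ : 0 < μ₂) {t : ℕ}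
    {θ θ' r φ c : ℕ → ℝ} (hc : ∀ q, |c q| ≤ C)
    (hr : ∀ i, r i = μ₁ / (μ₁ + μ₂) * θ i + φ i / (μ₁ + μ₂ + ∑ j ∈ range (t + 1), φ j ^ 2)
        * (∑ q ∈ range (t + 1), c q * φ q - μ₁ / (μ₁ + μ₂) * ∑ j ∈ range (t + 1), θ j * φ j))
    (hθ' : ∀ i ∈ range (t + 1), θ' i = if i = t ∧ r t < ε then b else r i) :
    ‖vecOn (range (t + 1)) θ'‖
      ≤ μ₁ / (μ₁ + μ₂) * ‖vecOn (range (t + 1)) θ‖ + (2 * (√(t + 1 : ℝ) * C) + |b|) := by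
  have hr_le := vecOn.norm_estimate_update_le (by positivity) (by positivity) hr
  have hc_le : ‖vecOn (range (t + 1)) c‖ ≤ √(t + 1 : ℝ) * C := by
    simpa using vecOn.norm_le_sqrt_card_mul (s := range (t + 1)) hc
  linarith [vecOn.norm_reset_le hθ']

/-- Theorem 2 of the paper: running Algorithm 1 on system (1) under Assumption (A1),
all estimated parameters `θ̂_{k,k−1,t}(i)` are bounded, and the diagonal estimates
`θ̂_{k,k−1,t}(t)` stay in `[ε, β̂]`; this holds for any `λ > 0` and `γ₁,…,γ_m > 0`. -/
theorem stmt16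
    -- system (1) and Assumption (A1)
    (l n T : ℕ)
    (βmax : ℝ)
    (f : (Fin (l + n + 2) → ℝ) → ℕ → ℝ)
    (hf1 : ∀ t, t < T → ContDiff ℝ 1 fun x => f x t)
    (hf2 : ∀ t, t < T → ∀ x, ∀ i, |fderiv ℝ (fun x => f x t) x (Pi.single i 1)| ≤ βmax)
    -- parameters of Algorithm 1
    (μ₁ μ₂ ε : ℝ) (hμ₁ : 0 < μ₁) (hμ₂ : 0 < μ₂)
    (y₀ : ℝ)
    -- iterated trajectories, tracking errors
    (u : ℕ → ℕ → ℝ) (y : ℕ → ℕ → ℝ)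
    (hy : ∀ k : ℕ, IsTraj l n T f y₀ (u k) (y k))
    -- parameter estimation of Algorithm 1, with reset below the threshold ε
    (θh : ℕ → ℕ → ℕ → ℝ)
    (hθinit : ∀ t, t < T → ε ≤ θh 1 t t)
    (raw : ℕ → ℕ → ℕ → ℝ)
    (hraw : ∀ k, 2 ≤ k → ∀ t i, raw k t i =
      μ₁ / (μ₁ + μ₂) * θh (k - 1) t i
        + (u (k - 1) i - u (k - 2) i)
            / (μ₁ + μ₂ + ∑ j ∈ Finset.range (t + 1), (u (k - 1) j - u (k - 2) j) ^ 2)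
          * (y (k - 1) (t + 1) - y (k - 2) (t + 1)
              - μ₁ / (μ₁ + μ₂)
                * ∑ j ∈ Finset.range (t + 1), θh (k - 1) t j * (u (k - 1) j - u (k - 2) j)))
    (hθupd : ∀ k, 2 ≤ k → ∀ t, t < T → ∀ i, i ≤ t →
      θh k t i = if i = t ∧ raw k t t < ε then θh 1 t t else raw k t i) :
    -- conclusion: boundedness of all estimated parameters
    ∃ βh : ℝ, ε ≤ βh ∧
      (∀ k, 1 ≤ k → ∀ t, t < T → ∀ i, i ≤ t → |θh k t i| ≤ βh) ∧
      (∀ k, 1 ≤ k → ∀ t, t < T → θh k t t ∈ Set.Icc ε βh) := by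
  set A := μ₁ / (μ₁ + μ₂)
  have hA0 : 0 ≤ A := by positivity
  have hA1 : A < 1 := (div_lt_one (by linarith)).2 (by linarith)
  obtain ⟨C, hC⟩ := exists_isBoundedComb_traj_sub (y₀ := y₀)
    (fun t ht => (hf1 t ht).differentiable one_ne_zero) hf2 T le_rfl
  set a : ℕ → ℕ → ℝ := fun t j => ‖vecOn (range (t + 1)) (θh (j + 1) t)‖
  set R : ℕ → ℝ := fun t => 2 * (√(t + 1 : ℝ) * C) + |θh 1 t t|
  have hstep : ∀ t < T, ∀ j, a t (j + 1) ≤ A * a t j + R t := by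
    intro t ht j
    obtain ⟨c, hcC, hc⟩ := hC (u (j + 1)) (u j) (y (j + 1)) (y j) (hy _) (hy _) (t + 1) ht
    refine norm_estimate_step_le (φ := fun q => u (j + 1) q - u j q) hμ₁ hμ₂ hcC (fun i => ?_)
      fun i hi => hθupd (j + 2) (by omega) t ht i (Nat.lt_succ_iff.1 (mem_range.1 hi))
    rw [hraw (j + 2) (by omega), Nat.add_sub_cancel, show j + 2 - 1 = j + 1 from rfl, hc]
  set M : ℕ → ℝ := fun t => max (a t 0) (R t / (1 - A))
  obtain ⟨B, hB⟩ := Finset.exists_le ((range T).image M)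
  have hθB : ∀ k, 1 ≤ k → ∀ t, t < T → ∀ i, i ≤ t → |θh k t i| ≤ B := by
    intro k hk t ht i hi
    obtain ⟨j, rfl⟩ := Nat.exists_eq_add_of_le' hk
    calc |θh (j + 1) t i| ≤ a t j := vecOn.abs_le_norm _ _ (mem_range.2 (by omega))
      _ ≤ M t := le_max_of_le_mul_add hA0 hA1 (hstep t ht) j
      _ ≤ B := hB _ (mem_image_of_mem _ (mem_range.2 ht))
  refine ⟨max ε B, le_max_left _ _, fun k hk t ht i hi => (hθB k hk t ht i hi).trans
    (le_max_right _ _), fun k hk t ht => ⟨?_, (le_abs_self _).trans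
    ((hθB k hk t ht t le_rfl).trans (le_max_right _ _))⟩⟩
  obtain rfl | hk2 := Nat.eq_or_lt_of_le hk
  · exact hθinit t ht
  rw [hθupd k hk2 t ht t le_rfl]
  split_ifs with hreset
  exacts [hθinit t ht, not_lt.1 fun h => hreset ⟨rfl, h⟩]
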